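/- arXiv:2309.01048 — 4 statements merged into one kernel-verified Lean document; each statement's English description precedes it below -/
import Mathlib

section
/- If τ is a smooth positive function and u = 2∂_x² log τ, then the Boussinesq equation ∂_x²(∂_x²u + 3u² - u) - ∂_y²u = 0 holds whenever (D_x⁴ - D_x² - D_y²) τ·τ = 0, i.e., whenever 2(τ τ_xxxx - 4τ_x τ_xxx + 3τ_xx²) - 2(τ τ_xx - τ_x²) - 2(τ τ_yy - τ_y²) = 0. -/
/-- Partial derivative in the first variable. -/
noncomputable def pdx (f : ℝ → ℝ → ℝ) : ℝ → ℝ → ℝ := fun x y => deriv (fun t => f t y) x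

/-- Partial derivative in the second variable. -/
noncomputable def pdy (f : ℝ → ℝ → ℝ) : ℝ → ℝ → ℝ := fun x y => deriv (fun t => f x t) y

/-! ### Auxiliary machinery -/

noncomputable def PX (Φ : ℝ × ℝ → ℝ) : ℝ × ℝ → ℝ := fun p => fderiv ℝ Φ p (1, 0)
noncomputable def PY (Φ : ℝ × ℝ → ℝ) : ℝ × ℝ → ℝ := fun p => fderiv ℝ Φ p (0, 1)

noncomputable def UC (τ : ℝ → ℝ → ℝ) : ℝ × ℝ → ℝ := fun p => τ p.1 p.2
noncomputable def LG (τ : ℝ → ℝ → ℝ) : ℝ × ℝ → ℝ := fun p => Real.log (τ p.1 p.2)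

theorem PX.contDiff {Φ : ℝ × ℝ → ℝ} (h : ContDiff ℝ (⊤ : ℕ∞) Φ) : ContDiff ℝ (⊤ : ℕ∞) (PX Φ) :=
  (h.fderiv_right (by simp)).clm_apply contDiff_const

theorem PY.contDiff {Φ : ℝ × ℝ → ℝ} (h : ContDiff ℝ (⊤ : ℕ∞) Φ) : ContDiff ℝ (⊤ : ℕ∞) (PY Φ) :=
  (h.fderiv_right (by simp)).clm_apply contDiff_const

theorem pdx_curry {Φ : ℝ × ℝ → ℝ} (h : ContDiff ℝ (⊤ : ℕ∞) Φ) :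
    pdx (fun x y => Φ (x, y)) = fun x y => PX Φ (x, y) := by
  funext x y
  have h1 : HasDerivAt (fun t : ℝ => (t, y)) ((1 : ℝ), (0 : ℝ)) x :=
    (hasDerivAt_id x).prodMk (hasDerivAt_const x y)
  have h2 := (h.differentiable (by simp) (x, y)).hasFDerivAt.comp_hasDerivAt x h1
  exact h2.deriv

theorem pdy_curry {Φ : ℝ × ℝ → ℝ} (h : ContDiff ℝ (⊤ : ℕ∞) Φ) :
    pdy (fun x y => Φ (x, y)) = fun x y => PY Φ (x, y) := by
  funext x y
  have h1 : HasDerivAt (fun t : ℝ => (x, t)) ((0 : ℝ), (1 : ℝ)) y :=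
    (hasDerivAt_const y x).prodMk (hasDerivAt_id y)
  have h2 := (h.differentiable (by simp) (x, y)).hasFDerivAt.comp_hasDerivAt y h1
  exact h2.deriv

theorem PX_PY_comm {Φ : ℝ × ℝ → ℝ} (h : ContDiff ℝ (⊤ : ℕ∞) Φ) : PX (PY Φ) = PY (PX Φ) := by
  funext p
  have hd : ∀ q, HasFDerivAt Φ (fderiv ℝ Φ q) q := fun q => (h.differentiable (by simp) q).hasFDerivAt
  have hd2 : HasFDerivAt (fderiv ℝ Φ) (fderiv ℝ (fderiv ℝ Φ) p) p :=
    ((h.fderiv_right (m := (⊤ : ℕ∞)) (by simp)).differentiable (by simp) p).hasFDerivAt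
  have hsym := second_derivative_symmetric hd hd2 (1, 0) (0, 1)
  have key : ∀ v w : ℝ × ℝ,
      fderiv ℝ (fun q => fderiv ℝ Φ q v) p w = fderiv ℝ (fderiv ℝ Φ) p w v := by
    intro v w
    have : HasFDerivAt (fun q => fderiv ℝ Φ q v)
        ((ContinuousLinearMap.apply ℝ ℝ v).comp (fderiv ℝ (fderiv ℝ Φ) p)) p :=
      (ContinuousLinearMap.apply ℝ ℝ v).hasFDerivAt.comp p hd2
    rw [this.fderiv]; rfl
  show fderiv ℝ (fun q => fderiv ℝ Φ q (0,1)) p (1,0) = fderiv ℝ (fun q => fderiv ℝ Φ q (1,0)) p (0,1)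
  rw [key, key]
  exact hsym

section rules
variable (v : ℝ × ℝ) {Φ Ψ : ℝ × ℝ → ℝ}

theorem PV_mul (hΦ : Differentiable ℝ Φ) (hΨ : Differentiable ℝ Ψ) (p : ℝ × ℝ) :
    fderiv ℝ (fun q => Φ q * Ψ q) p v = fderiv ℝ Φ p v * Ψ p + Φ p * fderiv ℝ Ψ p v := by
  rw [fderiv_fun_mul (hΦ p) (hΨ p)]
  simp; ring

theorem PV_const_mul (c : ℝ) (hΦ : Differentiable ℝ Φ) (p : ℝ × ℝ) :
    fderiv ℝ (fun q => c * Φ q) p v = c * fderiv ℝ Φ p v := by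
  rw [fderiv_const_mul (hΦ p)]; simp

theorem PV_add (hΦ : Differentiable ℝ Φ) (hΨ : Differentiable ℝ Ψ) (p : ℝ × ℝ) :
    fderiv ℝ (fun q => Φ q + Ψ q) p v = fderiv ℝ Φ p v + fderiv ℝ Ψ p v := by
  rw [fderiv_fun_add (hΦ p) (hΨ p)]; simp

theorem PV_log (hΦ : Differentiable ℝ Φ) (p : ℝ × ℝ) (h0 : Φ p ≠ 0) :
    fderiv ℝ (fun q => Real.log (Φ q)) p v = (Φ p)⁻¹ * fderiv ℝ Φ p v := by
  rw [((hΦ p).hasFDerivAt.log h0).fderiv]; simp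

/-- Differentiating a product identity. -/
theorem DV_mul_eq {A B X : ℝ × ℝ → ℝ} (dA : Differentiable ℝ A) (dB : Differentiable ℝ B)
    (h : ∀ p, A p * B p = X p) (p : ℝ × ℝ) :
    fderiv ℝ A p v * B p + A p * fderiv ℝ B p v = fderiv ℝ X p v := by
  have hX : X = fun q => A q * B q := (funext h).symm
  rw [hX, PV_mul v dA dB p]

/-- Differentiating a weighted three-product identity. -/
theorem DV_lin3 {A B C D E G X : ℝ × ℝ → ℝ} (c2 : ℝ)
    (dA : Differentiable ℝ A) (dB : Differentiable ℝ B) (dC : Differentiable ℝ C)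
    (dD : Differentiable ℝ D) (dE : Differentiable ℝ E) (dG : Differentiable ℝ G)
    (h : ∀ p, A p * B p + c2 * (C p * D p) + E p * G p = X p) (p : ℝ × ℝ) :
    (fderiv ℝ A p v * B p + A p * fderiv ℝ B p v)
      + c2 * (fderiv ℝ C p v * D p + C p * fderiv ℝ D p v)
      + (fderiv ℝ E p v * G p + E p * fderiv ℝ G p v) = fderiv ℝ X p v := by
  have hX : X = fun q => A q * B q + c2 * (C q * D q) + E q * G q := (funext h).symm
  rw [hX, PV_add v (((dA.fun_mul dB).fun_add ((dC.fun_mul dD).const_mul c2))) (dE.fun_mul dG),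
    PV_add v (dA.fun_mul dB) ((dC.fun_mul dD).const_mul c2),
    PV_mul v dA dB, PV_const_mul v c2 (dC.fun_mul dD), PV_mul v dC dD, PV_mul v dE dG]

end rules

theorem pointwise (a f1 f2 f3 f4 fy fyy w1 w2 w3 w4 wy wyy : ℝ) (ha : a ≠ 0)
    (e0 : a*w1 = f1) (e1 : f1*w1 + a*w2 = f2) (e2 : f2*w1 + 2*f1*w2 + a*w3 = f3)
    (e3 : f3*w1 + 3*f2*w2 + 3*f1*w3 + a*w4 = f4) (g0 : a*wy = fy) (g1 : fy*wy + a*wyy = fyy)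
    (hb : 2*(a*f4 - 4*f1*f3 + 3*f2^2) - 2*(a*f2 - f1^2) - 2*(a*fyy - fy^2) = 0) :
    w4 + 6*w2^2 - w2 - wyy = 0 := by
  have hw2 : w2 = (a*f2 - f1^2)/a^2 := by field_simp; linear_combination a*e1 - f1*e0
  have hw4 : w4 = (a^3*f4 - 4*a^2*f1*f3 - 3*a^2*f2^2 + 12*a*f1^2*f2 - 6*f1^4)/a^4 := by
    field_simp
    linear_combination a^3*e3 - 3*a^2*f1*e2 + (6*a*f1^2 - 3*a^2*f2)*e1 + (6*a*f1*f2 - 6*f1^3 - a^2*f3)*e0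
  have hwyy : wyy = (a*fyy - fy^2)/a^2 := by field_simp; linear_combination a*g1 - fy*g0
  rw [hw4, hw2, hwyy]
  field_simp
  linear_combination (a^2/2)*hb

/-- If τ is a smooth positive function and u = 2∂_x² log τ, then
    (D_x⁴ - D_x² - D_y²) τ·τ = 0 implies the Boussinesq equation
    ∂_x²(∂_x²u + 3u² - u) - ∂_y²u = 0. -/
theorem boussinesq_of_bilinear (τ : ℝ → ℝ → ℝ)
    (hτ : ContDiff ℝ (⊤ : ℕ∞) (fun p : ℝ × ℝ => τ p.1 p.2))
    (hpos : ∀ x y, 0 < τ x y)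
    (hbil : ∀ x y,
      2 * (τ x y * pdx (pdx (pdx (pdx τ))) x y
            - 4 * pdx τ x y * pdx (pdx (pdx τ)) x y
            + 3 * (pdx (pdx τ) x y)^2)
      - 2 * (τ x y * pdx (pdx τ) x y - (pdx τ x y)^2)
      - 2 * (τ x y * pdy (pdy τ) x y - (pdy τ x y)^2) = 0) :
    ∀ x y,
      pdx (pdx (fun a b =>
        pdx (pdx (fun c d => 2 * pdx (pdx (fun e f => Real.log (τ e f))) c d)) a b
        + 3 * (2 * pdx (pdx (fun e f => Real.log (τ e f))) a b)^2
        - 2 * pdx (pdx (fun e f => Real.log (τ e f))) a b)) x y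
      - pdy (pdy (fun a b => 2 * pdx (pdx (fun e f => Real.log (τ e f))) a b)) x y = 0 := by
  -- Basic data
  have hF : ContDiff ℝ (⊤ : ℕ∞) (UC τ) := hτ
  have hFne : ∀ p : ℝ × ℝ, UC τ p ≠ 0 := fun p => (hpos p.1 p.2).ne'
  have hW : ContDiff ℝ (⊤ : ℕ∞) (LG τ) := hF.log hFne
  -- Smoothness chain
  have hF1 := PX.contDiff hF
  have hF2 := PX.contDiff hF1
  have hF3 := PX.contDiff hF2
  have hFy := PY.contDiff hF
  have hW1 := PX.contDiff hW
  have hW2 := PX.contDiff hW1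
  have hW3 := PX.contDiff hW2
  have hWy := PY.contDiff hW
  have hWyy := PY.contDiff hWy
  have dF : Differentiable ℝ (UC τ) := hF.differentiable (by simp)
  have dF1 : Differentiable ℝ (PX (UC τ)) := hF1.differentiable (by simp)
  have dF2 : Differentiable ℝ (PX (PX (UC τ))) := hF2.differentiable (by simp)
  have dF3 : Differentiable ℝ (PX (PX (PX (UC τ)))) := hF3.differentiable (by simp)
  have dFy : Differentiable ℝ (PY (UC τ)) := hFy.differentiable (by simp)
  have dW : Differentiable ℝ (LG τ) := hW.differentiable (by simp)
  have dW1 : Differentiable ℝ (PX (LG τ)) := hW1.differentiable (by simp)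
  have dW2 : Differentiable ℝ (PX (PX (LG τ))) := hW2.differentiable (by simp)
  have dW3 : Differentiable ℝ (PX (PX (PX (LG τ)))) := hW3.differentiable (by simp)
  have dWy : Differentiable ℝ (PY (LG τ)) := hWy.differentiable (by simp)
  -- Curried ↔ uncurried conversions for τ
  have c1 : pdx τ = fun x y => PX (UC τ) (x, y) := pdx_curry hF
  have c2 : pdx (pdx τ) = fun x y => PX (PX (UC τ)) (x, y) := by
    rw [c1]; exact pdx_curry hF1
  have c3 : pdx (pdx (pdx τ)) = fun x y => PX (PX (PX (UC τ))) (x, y) := by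
    rw [c2]; exact pdx_curry hF2
  have c4 : pdx (pdx (pdx (pdx τ))) = fun x y => PX (PX (PX (PX (UC τ)))) (x, y) := by
    rw [c3]; exact pdx_curry hF3
  have cy1 : pdy τ = fun x y => PY (UC τ) (x, y) := pdy_curry hF
  have cy2 : pdy (pdy τ) = fun x y => PY (PY (UC τ)) (x, y) := by
    rw [cy1]; exact pdy_curry hFy
  -- Bilinear hypothesis in uncurried form
  have hbil' : ∀ p : ℝ × ℝ,
      2 * (UC τ p * PX (PX (PX (PX (UC τ)))) p
            - 4 * PX (UC τ) p * PX (PX (PX (UC τ))) p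
            + 3 * (PX (PX (UC τ)) p)^2)
      - 2 * (UC τ p * PX (PX (UC τ)) p - (PX (UC τ) p)^2)
      - 2 * (UC τ p * PY (PY (UC τ)) p - (PY (UC τ) p)^2) = 0 := by
    intro p
    have h := hbil p.1 p.2
    rw [c4, c3, c2, c1, cy2, cy1] at h
    exact h
  -- log-derivative identities
  have i0 : ∀ p, UC τ p * PX (LG τ) p = PX (UC τ) p := by
    intro p
    have h : PX (LG τ) p = (UC τ p)⁻¹ * fderiv ℝ (UC τ) p (1, 0) :=
      PV_log (1, 0) dF p (hFne p)
    rw [h]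
    field_simp [hFne p]
    rfl
  have j0 : ∀ p, UC τ p * PY (LG τ) p = PY (UC τ) p := by
    intro p
    have h : PY (LG τ) p = (UC τ p)⁻¹ * fderiv ℝ (UC τ) p (0, 1) :=
      PV_log (0, 1) dF p (hFne p)
    rw [h]
    field_simp [hFne p]
    rfl
  have i1 : ∀ p, PX (UC τ) p * PX (LG τ) p + UC τ p * PX (PX (LG τ)) p = PX (PX (UC τ)) p :=
    fun p => DV_mul_eq (1, 0) dF dW1 i0 p
  have j1 : ∀ p, PY (UC τ) p * PY (LG τ) p + UC τ p * PY (PY (LG τ)) p = PY (PY (UC τ)) p :=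
    fun p => DV_mul_eq (0, 1) dF dWy j0 p
  have i2 : ∀ p, (PX (PX (UC τ)) p * PX (LG τ) p + PX (UC τ) p * PX (PX (LG τ)) p)
      + (0:ℝ) * (PX (UC τ) p * LG τ p + UC τ p * PX (LG τ) p)
      + (PX (UC τ) p * PX (PX (LG τ)) p + UC τ p * PX (PX (PX (LG τ))) p)
      = PX (PX (PX (UC τ))) p := by
    intro p
    refine DV_lin3 (1, 0) 0 dF1 dW1 dF dW dF dW2 (fun q => ?_) p
    linear_combination i1 q
  have i3 : ∀ p, (PX (PX (PX (UC τ))) p * PX (LG τ) p + PX (PX (UC τ)) p * PX (PX (LG τ)) p)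
      + (2:ℝ) * (PX (PX (UC τ)) p * PX (PX (LG τ)) p + PX (UC τ) p * PX (PX (PX (LG τ))) p)
      + (PX (UC τ) p * PX (PX (PX (LG τ))) p + UC τ p * PX (PX (PX (PX (LG τ)))) p)
      = PX (PX (PX (PX (UC τ)))) p := by
    intro p
    refine DV_lin3 (1, 0) 2 dF2 dW1 dF1 dW2 dF dW3 (fun q => ?_) p
    linear_combination i2 q
  -- The key pointwise identity E = 0
  have hE : ∀ p : ℝ × ℝ, PX (PX (PX (PX (LG τ)))) p + 6 * (PX (PX (LG τ)) p)^2
      - PX (PX (LG τ)) p - PY (PY (LG τ)) p = 0 := by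
    intro p
    refine pointwise (UC τ p) (PX (UC τ) p) (PX (PX (UC τ)) p) (PX (PX (PX (UC τ))) p)
      (PX (PX (PX (PX (UC τ)))) p) (PY (UC τ) p) (PY (PY (UC τ)) p)
      (PX (LG τ) p) (PX (PX (LG τ)) p) (PX (PX (PX (LG τ))) p) (PX (PX (PX (PX (LG τ)))) p)
      (PY (LG τ) p) (PY (PY (LG τ)) p) (hFne p) (i0 p) ?_ ?_ ?_ (j0 p) ?_ ?_
    · linear_combination i1 p
    · linear_combination i2 p
    · linear_combination i3 p
    · linear_combination j1 p
    · linear_combination hbil' p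
  -- Conversions for the goal
  intro x y
  have w1c : pdx (fun e f => Real.log (τ e f)) = fun x y => PX (LG τ) (x, y) := pdx_curry hW
  have w2c : pdx (pdx (fun e f => Real.log (τ e f))) = fun x y => PX (PX (LG τ)) (x, y) := by
    rw [w1c]; exact pdx_curry hW1
  simp only [w2c]
  -- inner double x-derivative of 2*W2
  have u1 : pdx (fun c d => 2 * PX (PX (LG τ)) (c, d))
      = fun x y => 2 * PX (PX (PX (LG τ))) (x, y) := by
    have h1 : pdx (fun c d => 2 * PX (PX (LG τ)) (c, d))
        = fun x y => PX (fun p => 2 * PX (PX (LG τ)) p) (x, y) :=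
      pdx_curry (contDiff_const.mul hW2)
    rw [h1]
    funext a b
    exact PV_const_mul (1, 0) 2 dW2 (a, b)
  have u2 : pdx (pdx (fun c d => 2 * PX (PX (LG τ)) (c, d)))
      = fun x y => 2 * PX (PX (PX (PX (LG τ)))) (x, y) := by
    rw [u1]
    have h1 : pdx (fun x y => 2 * PX (PX (PX (LG τ))) (x, y))
        = fun x y => PX (fun p => 2 * PX (PX (PX (LG τ))) p) (x, y) :=
      pdx_curry (contDiff_const.mul hW3)
    rw [h1]
    funext a b
    exact PV_const_mul (1, 0) 2 dW3 (a, b)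
  simp only [u2]
  -- replace the inner expression using E = 0
  have hEfun : (fun a b => 2 * PX (PX (PX (PX (LG τ)))) (a, b)
        + 3 * (2 * PX (PX (LG τ)) (a, b))^2 - 2 * PX (PX (LG τ)) (a, b))
      = fun a b => 2 * PY (PY (LG τ)) (a, b) := by
    funext a b
    linear_combination 2 * hE (a, b)
  rw [hEfun]
  -- outer double x-derivative of 2*Wyy
  have hWyy3 := PX.contDiff hWyy
  have dWyy : Differentiable ℝ (PY (PY (LG τ))) := hWyy.differentiable (by simp)
  have dWyyx : Differentiable ℝ (PX (PY (PY (LG τ)))) := hWyy3.differentiable (by simp)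
  have s2 : pdx (pdx (fun a b => 2 * PY (PY (LG τ)) (a, b)))
      = fun x y => 2 * PX (PX (PY (PY (LG τ)))) (x, y) := by
    have h1 : pdx (fun a b => 2 * PY (PY (LG τ)) (a, b))
        = fun x y => PX (fun p => 2 * PY (PY (LG τ)) p) (x, y) :=
      pdx_curry (contDiff_const.mul hWyy)
    have h1' : pdx (fun a b => 2 * PY (PY (LG τ)) (a, b))
        = fun x y => 2 * PX (PY (PY (LG τ))) (x, y) := by
      rw [h1]; funext a b; exact PV_const_mul (1, 0) 2 dWyy (a, b)
    rw [h1']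
    have h2 : pdx (fun x y => 2 * PX (PY (PY (LG τ))) (x, y))
        = fun x y => PX (fun p => 2 * PX (PY (PY (LG τ))) p) (x, y) :=
      pdx_curry (contDiff_const.mul hWyy3)
    rw [h2]
    funext a b
    exact PV_const_mul (1, 0) 2 dWyyx (a, b)
  -- double y-derivative of 2*W2
  have hW2y := PY.contDiff hW2
  have dW2y : Differentiable ℝ (PY (PX (PX (LG τ)))) := hW2y.differentiable (by simp)
  have t2 : pdy (pdy (fun a b => 2 * PX (PX (LG τ)) (a, b)))
      = fun x y => 2 * PY (PY (PX (PX (LG τ)))) (x, y) := by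
    have h1 : pdy (fun a b => 2 * PX (PX (LG τ)) (a, b))
        = fun x y => PY (fun p => 2 * PX (PX (LG τ)) p) (x, y) :=
      pdy_curry (contDiff_const.mul hW2)
    have h1' : pdy (fun a b => 2 * PX (PX (LG τ)) (a, b))
        = fun x y => 2 * PY (PX (PX (LG τ))) (x, y) := by
      rw [h1]; funext a b; exact PV_const_mul (0, 1) 2 dW2 (a, b)
    rw [h1']
    have h2 : pdy (fun x y => 2 * PY (PX (PX (LG τ))) (x, y))
        = fun x y => PY (fun p => 2 * PY (PX (PX (LG τ))) p) (x, y) :=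
      pdy_curry (contDiff_const.mul hW2y)
    rw [h2]
    funext a b
    exact PV_const_mul (0, 1) 2 dW2y (a, b)
  rw [s2, t2]
  -- Clairaut commutations
  have A1 : PX (PY (PY (LG τ))) = PY (PX (PY (LG τ))) := PX_PY_comm hWy
  have A2 : PX (PY (LG τ)) = PY (PX (LG τ)) := PX_PY_comm hW
  have A3 : PX (PY (PX (LG τ))) = PY (PX (PX (LG τ))) := PX_PY_comm hW1
  have A4 : PX (PY (PY (PX (LG τ)))) = PY (PX (PY (PX (LG τ)))) :=
    PX_PY_comm (PY.contDiff (PX.contDiff hW))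
  have hcomm : PX (PX (PY (PY (LG τ)))) = PY (PY (PX (PX (LG τ)))) := by
    rw [A1, A2, A4, A3]
  rw [hcomm]
  ring
end

section
/- Let η be a real-valued homogeneous polynomial of degree m on ℝ² satisfying η Δη = |∇η|² on ℝ², with η not identically zero. Then m is even, m = 2j, and η(x,y) = a(x² + y²)^j for some real constant a. -/
/-!
Dehomogenizing, `f(x) = η(x, 1)`, Euler's identity turns the equation into the ODE
`(1 + x²)(f f'' - f'²) + 2x f f' = m f²`, which says that `(1 + x²) f' / f - m x` is constant.
Then every prime factor of `f` divides `1 + x²`, which is irreducible over `ℝ`, so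
`f = a (1 + x²)^k`, and substituting back gives `m = 2k`. A homogeneous polynomial in two
variables is determined by its dehomogenization.
-/

namespace Polynomial

variable {K : Type*} [Field K] [CharZero K]

theorem exists_eq_C_mul_of_mul_derivative_eq {f q : K[X]} (hf : f ≠ 0)
    (h : f * derivative q = derivative f * q) : ∃ c, q = C c * f := by
  classical
  obtain ⟨f₁, q₁, hf₁, hq₁, hcop⟩ := extract_gcd f q
  have hd : gcd f q ≠ 0 := fun h0 => hf ((gcd_eq_zero_iff f q).1 h0).1
  generalize gcd f q = d at hf₁ hq₁ hd
  subst hf₁ hq₁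
  have hf₁0 : f₁ ≠ 0 := right_ne_zero_of_mul hf
  have h₁ : f₁ * derivative q₁ = derivative f₁ * q₁ := by
    refine mul_left_cancel₀ (pow_ne_zero 2 hd) ?_
    simp only [derivative_mul] at h
    linear_combination h
  have hf₁' : derivative f₁ = 0 := by
    rw [← dvd_derivative_iff]
    exact (gcd_isUnit_iff_isRelPrime.1 hcop).dvd_of_dvd_mul_right ⟨_, h₁.symm⟩
  have hq₁' : derivative q₁ = 0 := by simpa [hf₁', hf₁0] using h₁
  rw [eq_C_of_derivative_eq_zero hf₁'] at hf₁0 ⊢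
  rw [eq_C_of_derivative_eq_zero hq₁']
  refine ⟨q₁.coeff 0 / f₁.coeff 0, ?_⟩
  rw [mul_left_comm, ← C_mul, div_mul_cancel₀ _ (by simpa using hf₁0)]

theorem prime_dvd_of_mul_derivative_eq_mul {ρ f p g : K[X]} (hρ : Prime ρ) (hf : f ≠ 0)
    (hρf : ρ ∣ f) (h : p * derivative f = g * f) : ρ ∣ p := by
  obtain ⟨h₁, hfe, hρh₁⟩ :=
    (FiniteMultiplicity.of_not_isUnit hρ.not_isUnit hf).exists_eq_pow_mul_and_not_dvd
  generalize multiplicity ρ f = k at hfe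
  obtain _ | k := k
  · exact absurd (by simpa [hfe] using hρf) hρh₁
  -- `f'` is divisible by `ρ ^ k` but not by `ρ ^ (k + 1)`, so `ρ` must be absorbed by `p`.
  have hcancel : p * (C ((k : K) + 1) * derivative ρ * h₁ + ρ * derivative h₁) = g * ρ * h₁ := by
    refine mul_left_cancel₀ (pow_ne_zero k hρ.ne_zero) ?_
    rw [hfe, derivative_mul, derivative_pow_succ] at h
    linear_combination h
  have hdvd : ρ ∣ p * derivative ρ * h₁ * C ((k : K) + 1) :=
    ⟨g * h₁ - p * derivative h₁, by linear_combination hcancel⟩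
  have hρρ' : ¬ ρ ∣ derivative ρ := by
    rw [dvd_derivative_iff, derivative_eq_zero]
    exact hρ.irreducible.natDegree_pos.ne'
  have hunit : IsUnit (C ((k : K) + 1)) := isUnit_C.2 ((Nat.cast_add_one_ne_zero k).isUnit)
  rcases hρ.dvd_or_dvd (hunit.dvd_mul_right.1 hdvd) with hdvd | hdvd
  · exact (hρ.dvd_or_dvd hdvd).resolve_right hρρ'
  · exact absurd hdvd hρh₁

theorem exists_eq_C_mul_pow_of_mul_derivative_eq_mul {q f g : K[X]} (hq : Irreducible q)
    (hf : f ≠ 0) (h : q * derivative f = g * f) : ∃ (a : K) (k : ℕ), f = C a * q ^ k := by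
  obtain ⟨h₁, hfe, hqh₁⟩ :=
    (FiniteMultiplicity.of_not_isUnit hq.not_isUnit hf).exists_eq_pow_mul_and_not_dvd
  have hh₁ : IsUnit h₁ := by
    by_contra hnu
    obtain ⟨ρ, hρ, hρh₁⟩ :=
      WfDvdMonoid.exists_irreducible_factor hnu (right_ne_zero_of_mul (hfe ▸ hf))
    have hρq :=
      prime_dvd_of_mul_derivative_eq_mul hρ.prime hf (hfe ▸ dvd_mul_of_dvd_right hρh₁ _) h
    exact hqh₁ (((hρ.dvd_irreducible_iff_associated hq).1 hρq).symm.dvd.trans hρh₁)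
  obtain ⟨a, -, rfl⟩ := isUnit_iff.1 hh₁
  exact ⟨a, _, hfe.trans (mul_comm _ _)⟩

theorem irreducible_one_add_X_sq : Irreducible (1 + X ^ 2 : ℝ[X]) := by
  have hdeg : (1 + X ^ 2 : ℝ[X]).natDegree = 2 := by compute_degree!
  refine irreducible_of_degree_le_three_of_not_isRoot (by simp [hdeg]) fun x hx => ?_
  simp only [IsRoot, eval_add, eval_one, eval_pow, eval_X] at hx
  nlinarith [sq_nonneg x]

theorem one_add_X_sq_mul_derivative_pow {R : Type*} [CommSemiring R] (k : ℕ) :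
    (1 + X ^ 2 : R[X]) * derivative ((1 + X ^ 2) ^ k) = 2 * (k : R[X]) * X * (1 + X ^ 2) ^ k := by
  cases k with
  | zero => simp
  | succ k =>
    rw [derivative_pow_succ]
    simp only [map_add, map_natCast, map_one, derivative_one, derivative_X_pow_succ,
      Nat.cast_one, pow_one, zero_add, Nat.cast_add]
    ring

theorem exists_eq_C_mul_one_add_X_sq_pow {f : ℝ[X]} {m : ℕ} (hf : f ≠ 0)
    (h : (1 + X ^ 2) * (f * derivative (derivative f) - derivative f ^ 2)
      + 2 * X * f * derivative f = (m : ℝ[X]) * f ^ 2) :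
    ∃ (a : ℝ) (k : ℕ), f = C a * (1 + X ^ 2) ^ k ∧ m = 2 * k := by
  -- `h` says that `(1 + X ^ 2) * f' / f - m * X` has zero derivative.
  obtain ⟨c, hc⟩ : ∃ c, (1 + X ^ 2) * derivative f - (m : ℝ[X]) * X * f = C c * f := by
    refine exists_eq_C_mul_of_mul_derivative_eq hf ?_
    simp only [derivative_sub, derivative_mul, derivative_one, derivative_X_pow_succ, Nat.cast_one,
      map_add, map_one, pow_one, zero_add, derivative_natCast, zero_mul,
      derivative_X, mul_one]
    linear_combination h
  have hode : (1 + X ^ 2) * derivative f = (C c + (m : ℝ[X]) * X) * f := by linear_combination hc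
  obtain ⟨a, k, rfl⟩ :=
    exists_eq_C_mul_pow_of_mul_derivative_eq_mul irreducible_one_add_X_sq hf hode
  refine ⟨a, k, rfl, ?_⟩
  have hlin : C c + (m : ℝ[X]) * X = 2 * (k : ℝ[X]) * X := by
    refine mul_right_cancel₀ hf ?_
    rw [← hode, derivative_C_mul, mul_left_comm, one_add_X_sq_mul_derivative_pow]
    ring
  have := congrArg (coeff · 1) hlin
  simp only [coeff_add, coeff_C_succ, coeff_mul_X, coeff_natCast_ite, ↓reduceIte, zero_add,
    coeff_ofNat_mul] at this
  exact_mod_cast this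

end Polynomial

namespace MvPolynomial

theorem pderiv_pderiv_comm {σ R : Type*} [CommSemiring R] (i j : σ) (p : MvPolynomial σ R) :
    pderiv i (pderiv j p) = pderiv j (pderiv i p) := by
  classical
  induction p using MvPolynomial.induction_on with
  | C a => simp
  | add p q hp hq => simp only [map_add, hp, hq]
  | mul_X p k hp =>
    simp only [pderiv_mul, map_add, pderiv_X, hp, Pi.single_apply]
    split_ifs <;> simp [add_right_comm]

variable {R : Type*}

noncomputable abbrev dehomogenize [CommSemiring R] : MvPolynomial (Fin 2) R →ₐ[R] Polynomial R :=
  aeval ![Polynomial.X, 1]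

theorem derivative_dehomogenize [CommSemiring R] (p : MvPolynomial (Fin 2) R) :
    Polynomial.derivative (dehomogenize p) = dehomogenize (pderiv 0 p) := by
  induction p using MvPolynomial.induction_on with
  | C a => simp
  | add p q hp hq => simp only [map_add, hp, hq]
  | mul_X p i hp =>
    rw [map_mul, Polynomial.derivative_mul, hp, pderiv_mul, map_add, map_mul, map_mul]
    fin_cases i <;> simp [pderiv_X]

theorem IsHomogeneous.eq_of_dehomogenize_eq [CommSemiring R] {n : ℕ}
    {p q : MvPolynomial (Fin 2) R} (hp : p.IsHomogeneous n) (hq : q.IsHomogeneous n)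
    (h : dehomogenize p = dehomogenize q) : p = q := by
  rw [← Polynomial.homogenize_eq_of_isHomogeneous hp rfl,
    ← Polynomial.homogenize_eq_of_isHomogeneous hq rfl, h]

open Polynomial in
theorem IsHomogeneous.dehomogenize_ode_of_mul_laplacian_eq [CommRing R] {m : ℕ}
    {η : MvPolynomial (Fin 2) R} (hhom : η.IsHomogeneous m)
    (heq : η * (pderiv 0 (pderiv 0 η) + pderiv 1 (pderiv 1 η))
      = (pderiv 0 η) ^ 2 + (pderiv 1 η) ^ 2) {f : R[X]} (hf : dehomogenize η = f) :
    (1 + Polynomial.X ^ 2) * (f * derivative (derivative f) - derivative f ^ 2)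
      + 2 * Polynomial.X * f * derivative f = (m : R[X]) * f ^ 2 := by
  have euler : X 0 * pderiv 0 η + X 1 * pderiv 1 η = (m : MvPolynomial (Fin 2) R) * η := by
    simpa [Fin.sum_univ_two, nsmul_eq_mul] using hhom.sum_X_mul_pderiv
  have euler₁ := congrArg (pderiv 1) euler
  simp only [pderiv_mul, map_add, pderiv_X] at euler₁
  rw [pderiv_pderiv_comm] at euler₁
  have e1 := congrArg dehomogenize euler
  have e2 := congrArg dehomogenize euler₁
  have e3 := congrArg dehomogenize heq
  simp only [map_add, map_mul, map_pow, map_natCast, aeval_X, Matrix.cons_val_zero,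
    Matrix.cons_val_one, Matrix.cons_val_fin_one, one_mul, zero_mul, zero_add, Pi.single_eq_same,
    Pi.single_eq_of_ne zero_ne_one, Derivation.map_natCast, ← derivative_dehomogenize, hf]
    at e1 e2 e3
  set g := dehomogenize (pderiv 1 η)
  have e1' := congrArg derivative e1
  simp only [derivative_add, derivative_mul, derivative_X, one_mul, derivative_natCast, zero_mul,
    zero_add] at e1'
  linear_combination e3 - f * e2 + f * Polynomial.X * e1'
    + (g + f - Polynomial.X * derivative f) * e1

end MvPolynomial

open MvPolynomial

/-- A nonzero real-valued homogeneous polynomial η of degree m on ℝ² satisfying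
    η Δη = |∇η|² has even degree m = 2j and equals a(x² + y²)^j. -/
theorem homogeneous_real_bilinear_laplace_classification
    (m : ℕ) (η : MvPolynomial (Fin 2) ℝ)
    (hhom : η.IsHomogeneous m) (hne : η ≠ 0)
    (heq : η * (pderiv 0 (pderiv 0 η) + pderiv 1 (pderiv 1 η))
            = (pderiv 0 η)^2 + (pderiv 1 η)^2) :
    ∃ (j : ℕ) (a : ℝ), m = 2 * j ∧ η = C a * (X 0 ^ 2 + X 1 ^ 2) ^ j := by
  have hf : dehomogenize η ≠ 0 := fun h =>
    hne (hhom.eq_of_dehomogenize_eq (isHomogeneous_zero _ _ m) (by rw [h, map_zero]))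
  obtain ⟨a, j, hfa, rfl⟩ := Polynomial.exists_eq_C_mul_one_add_X_sq_pow hf
    (hhom.dehomogenize_ode_of_mul_laplacian_eq heq rfl)
  refine ⟨j, a, rfl, hhom.eq_of_dehomogenize_eq ?_ ?_⟩
  · simpa using (((isHomogeneous_X_pow 0 2).add (isHomogeneous_X_pow 1 2)).pow j).C_mul a
  · rw [hfa]
    simp [add_comm]
end

section
/- If a 2π-periodic smooth function g: ℝ → ℂ satisfies g g'' - (g')² = 0 and is not identically zero, then g(θ) = a e^{ikθ} for some constant a ∈ ℂ \ {0} and some integer k. -/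
open Complex Real

/-- A smooth 2π-periodic complex-valued function g with g g'' - (g')² = 0, not identically
    zero, is of the form g(θ) = a e^{ikθ} for some a ≠ 0 and integer k. -/
theorem periodic_log_linear (g : ℝ → ℂ)
    (hg : ContDiff ℝ (⊤ : ℕ∞) g)
    (hper : Function.Periodic g (2 * Real.pi))
    (heq : ∀ θ, g θ * deriv (deriv g) θ = (deriv g θ)^2)
    (hne : g ≠ 0) :
    ∃ (a : ℂ) (k : ℤ), a ≠ 0 ∧ ∀ θ : ℝ, g θ = a * Complex.exp (Complex.I * k * θ) := by
  have hg' : ContDiff ℝ (⊤ : ℕ∞) g := hg.of_le (by simp)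
  have hdg : Differentiable ℝ g := hg'.differentiable (by simp)
  have hdg' : Differentiable ℝ (deriv g) :=
    ((contDiff_infty_iff_deriv.mp hg').2).differentiable (by simp)
  set q : ℝ → ℂ := fun t => deriv g t / g t with hq
  have hqd : ∀ t, g t ≠ 0 → HasDerivAt q 0 t := by
    intro t ht
    have h1 : HasDerivAt g (deriv g t) t := (hdg t).hasDerivAt
    have h2 : HasDerivAt (deriv g) (deriv (deriv g) t) t := (hdg' t).hasDerivAt
    have h3 := h2.div h1 ht
    have hnum : deriv (deriv g) t * g t - deriv g t * deriv g t = 0 := by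
      linear_combination heq t
    rw [hnum, zero_div] at h3; exact h3
  have hexp : ∀ (c : ℂ) (t : ℝ),
      HasDerivAt (fun s : ℝ => Complex.exp (c * s)) (c * Complex.exp (c * t)) t := by
    intro c t
    have h1 : HasDerivAt (fun z : ℂ => Complex.exp (c * z)) (c * Complex.exp (c * t)) (t : ℂ) := by
      have := (Complex.hasDerivAt_exp (c * t)).comp (t : ℂ)
        ((hasDerivAt_id (t : ℂ)).const_mul c)
      simp [mul_comm] at this; exact this
    exact h1.comp_ofReal
  -- g never vanishes
  have hnz : ∀ θ, g θ ≠ 0 := by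
    obtain ⟨θ₀, hθ₀0⟩ := Function.ne_iff.mp hne
    have hθ₀ : g θ₀ ≠ 0 := by simpa using hθ₀0
    intro β hβ
    obtain ⟨n, hn⟩ := exists_nat_ge ((θ₀ - β) / (2 * Real.pi))
    have hpi : (0:ℝ) < 2 * Real.pi := by positivity
    set β' : ℝ := β + n * (2 * Real.pi) with hβ'def
    have hβ' : g β' = 0 := by rw [hβ'def, hper.nat_mul n β]; exact hβ
    have hβ'ge : θ₀ ≤ β' := by
      rw [div_le_iff₀ hpi] at hn; rw [hβ'def]; linarith [hn]
    set Z : Set ℝ := {t | θ₀ ≤ t ∧ g t = 0} with hZ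
    have hZne : Z.Nonempty := ⟨β', hβ'ge, hβ'⟩
    have hZcl : IsClosed Z :=
      (isClosed_le continuous_const continuous_id).inter
        (isClosed_eq hdg.continuous continuous_const)
    have hZbdd : BddBelow Z := ⟨θ₀, fun t ht => ht.1⟩
    set m : ℝ := sInf Z with hm
    have hmZ : m ∈ Z := hZcl.csInf_mem hZne hZbdd
    have hgm : g m = 0 := hmZ.2
    have hθ₀m : θ₀ < m := lt_of_le_of_ne hmZ.1 (by intro h; rw [h] at hθ₀; exact hθ₀ hgm)
    have hnzIco : ∀ t ∈ Set.Ico θ₀ m, g t ≠ 0 := by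
      intro t ht hgt
      exact absurd (csInf_le hZbdd ⟨ht.1, hgt⟩) (not_le.mpr ht.2)
    set c : ℂ := q θ₀ with hc
    have hqc : ∀ t ∈ Set.Ico θ₀ m, deriv g t = c * g t := by
      intro t ht
      have hconst : q t = q θ₀ := by
        have : ∀ y ∈ Set.Icc θ₀ t, q y = q θ₀ := by
          apply constant_of_has_deriv_right_zero
          · intro y hy
            have hgy : g y ≠ 0 := hnzIco y ⟨hy.1, lt_of_le_of_lt hy.2 ht.2⟩
            exact (((hdg' y).div (hdg y) hgy).continuousAt).continuousWithinAt
          · intro y hy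
            have hgy : g y ≠ 0 := hnzIco y ⟨hy.1, lt_trans hy.2 ht.2⟩
            exact (hqd y hgy).hasDerivWithinAt
        exact this t ⟨ht.1, le_refl t⟩
      have hgt : g t ≠ 0 := hnzIco t ht
      have h4 : deriv g t / g t = c := by rw [hc, ← hconst]
      exact (div_eq_iff hgt).mp h4
    set ψ : ℝ → ℂ := fun t => g t * Complex.exp (-c * t) with hψ
    have hψconst : ∀ y ∈ Set.Icc θ₀ m, ψ y = ψ θ₀ := by
      apply constant_of_has_deriv_right_zero
      · exact (hdg.continuous.mul
          (Complex.continuous_exp.comp (continuous_const.mul Complex.continuous_ofReal))).continuousOn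
      · intro y hy
        have hd : HasDerivAt ψ
            (deriv g y * Complex.exp (-c * y) + g y * (-c * Complex.exp (-c * y))) y :=
          ((hdg y).hasDerivAt).mul (hexp (-c) y)
        have h0 : deriv g y * Complex.exp (-c * y) + g y * (-c * Complex.exp (-c * y)) = 0 := by
          rw [hqc y hy]; ring
        exact (h0 ▸ hd).hasDerivWithinAt
    have h1 : ψ m = ψ θ₀ := hψconst m ⟨le_of_lt hθ₀m, le_refl m⟩
    have h2 : ψ m = 0 := by simp [hψ, hgm]
    have h3 : ψ θ₀ ≠ 0 := mul_ne_zero hθ₀ (Complex.exp_ne_zero _)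
    exact h3 (h1 ▸ h2)
  -- q constant globally
  have hqdiff : Differentiable ℝ q := fun t => (hqd t (hnz t)).differentiableAt
  have hqderiv : ∀ t, deriv q t = 0 := fun t => (hqd t (hnz t)).deriv
  set c : ℂ := q 0 with hc
  have hqc : ∀ t, deriv g t = c * g t := by
    intro t
    have h4 : deriv g t / g t = c := by
      rw [hc]; exact is_const_of_deriv_eq_zero hqdiff hqderiv t 0
    exact (div_eq_iff (hnz t)).mp h4
  have hform : ∀ t : ℝ, g t = g 0 * Complex.exp (c * t) := by
    set ψ : ℝ → ℂ := fun t => g t * Complex.exp (-c * t) with hψ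
    have hψd : ∀ t, HasDerivAt ψ 0 t := by
      intro y
      have hd : HasDerivAt ψ
          (deriv g y * Complex.exp (-c * y) + g y * (-c * Complex.exp (-c * y))) y :=
        ((hdg y).hasDerivAt).mul (hexp (-c) y)
      have h0 : deriv g y * Complex.exp (-c * y) + g y * (-c * Complex.exp (-c * y)) = 0 := by
        rw [hqc y]; ring
      exact h0 ▸ hd
    have hψconst : ∀ t, ψ t = ψ 0 :=
      fun t => is_const_of_deriv_eq_zero (fun y => (hψd y).differentiableAt)
        (fun y => (hψd y).deriv) t 0
    intro t
    have h5 : g t * Complex.exp (-c * t) = g 0 := by simpa [hψ] using hψconst t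
    calc g t = g t * Complex.exp (-c * t) * Complex.exp (c * t) := by
          rw [mul_assoc, ← Complex.exp_add]; simp
      _ = g 0 * Complex.exp (c * t) := by rw [h5]
  -- periodicity forces c = I k
  have hper0 : g 0 * Complex.exp (c * (2 * Real.pi : ℝ)) = g 0 := by
    have h := hper 0
    rw [zero_add] at h
    rw [hform (2 * Real.pi), hform 0] at h
    simpa using h
  have hexp1 : Complex.exp (c * (2 * Real.pi : ℝ)) = 1 := by
    have hg0 := hnz 0
    have h : g 0 * Complex.exp (c * (2 * Real.pi : ℝ)) = g 0 * 1 := by rw [mul_one]; exact hper0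
    exact mul_left_cancel₀ hg0 h
  obtain ⟨k, hk⟩ := Complex.exp_eq_one_iff.mp hexp1
  have hpic : ((2 * Real.pi : ℝ) : ℂ) ≠ 0 :=
    Complex.ofReal_ne_zero.mpr (by positivity)
  have hck : c = Complex.I * k := by
    have h2 : c * ((2 * Real.pi : ℝ) : ℂ) = (Complex.I * k) * ((2 * Real.pi : ℝ) : ℂ) := by
      rw [hk]; push_cast; ring
    exact mul_right_cancel₀ hpic h2
  refine ⟨g 0, k, hnz 0, fun θ => ?_⟩
  rw [hform θ, hck]
end

section
/- Define g_j(x,y) = (x² + y²)^{n-3j} x^{2j} y^{2j} for nonnegative integers i, j with 3i, 3j ≤ n. Then the quantity d_{i,j} := [(D_x² + D_y²) g_i·g_j] / (x²+y²)^{2n-3i-3j-1}, evaluated formally at x² = -1, y² = 1 (treating x², y² as independent polynomial variables), equals -12(i-j)²(-1)^{i+j}. -/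
set_option maxHeartbeats 4000000

open MvPolynomial Complex

private lemma h01 : pderiv (0 : Fin 2) (X 1 : MvPolynomial (Fin 2) ℂ) = 0 :=
  pderiv_X_of_ne (by decide)
private lemma h10 : pderiv (1 : Fin 2) (X 0 : MvPolynomial (Fin 2) ℂ) = 0 :=
  pderiv_X_of_ne (by decide)
private lemma pdnat (v : Fin 2) (n : ℕ) : pderiv v (n : MvPolynomial (Fin 2) ℂ) = 0 := by
  rw [← map_natCast (C : ℂ →+* MvPolynomial (Fin 2) ℂ) n, pderiv_C]
private lemma pdofnat (v : Fin 2) (n : ℕ) [n.AtLeastTwo] :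
    pderiv v (OfNat.ofNat n : MvPolynomial (Fin 2) ℂ) = 0 := by
  have h : (OfNat.ofNat n : MvPolynomial (Fin 2) ℂ) = ((n : ℕ) : MvPolynomial (Fin 2) ℂ) :=
    (Nat.cast_ofNat).symm
  rw [h, pdnat]
private lemma pd_one (v : Fin 2) : pderiv v (1 : MvPolynomial (Fin 2) ℂ) = 0 := pderiv_one

private lemma sub2_1 (n : ℕ) : n + 2 - 1 = n + 1 := by omega
private lemma sub2_2 (n : ℕ) : n + 2 - 2 = n := by omega
private lemma subr2 (m n : ℕ) : m + (n + 2) - 2 = m + n := by omega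
private lemma subr1 (m n : ℕ) : m + (n + 1) - 1 = m + n := by omega
private lemma subr1' (m n : ℕ) : m + (n + 2) - 1 = m + n + 1 := by omega

noncomputable def gg (c l : ℕ) : MvPolynomial (Fin 2) ℂ :=
  (X 0 ^ 2 + X 1 ^ 2) ^ c * X 0 ^ (2 * l) * X 1 ^ (2 * l)
noncomputable def lapl (p : MvPolynomial (Fin 2) ℂ) : MvPolynomial (Fin 2) ℂ :=
  pderiv 0 (pderiv 0 p) + pderiv 1 (pderiv 1 p)
noncomputable def PP (a b i j : ℕ) : MvPolynomial (Fin 2) ℂ :=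
  C (4*((a:ℂ)-(b:ℂ))*(((a:ℂ)-(b:ℂ)) + 4*((i:ℂ)-(j:ℂ)))) * X 0 ^ (2*i+2*j) * X 1 ^ (2*i+2*j)
   + C (4*((i:ℂ)-(j:ℂ))^2 - 2*((i:ℂ)+(j:ℂ))) *
      ((X 0 ^ 2 + X 1 ^ 2) * (X 0 ^ (2*i+2*j-2) * X 1 ^ (2*i+2*j)
        + X 0 ^ (2*i+2*j) * X 1 ^ (2*i+2*j-2)))

private lemma key (a b i j : ℕ) (hab : 1 ≤ a + b) :
    lapl (gg a i) * gg b j + gg a i * lapl (gg b j)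
        - 2 * (pderiv 0 (gg a i) * pderiv 0 (gg b j)
             + pderiv 1 (gg a i) * pderiv 1 (gg b j))
      = (X 0 ^ 2 + X 1 ^ 2) ^ (a + b - 1) * PP a b i j := by
  rcases a with _|_|a <;> rcases b with _|_|b <;> rcases i with _|i <;> rcases j with _|j <;>
    first
      | exact absurd hab (by omega)
      | (simp only [gg, lapl, PP, Nat.mul_succ, mul_zero, Nat.mul_zero, pow_zero, pow_one,
            zero_add, add_zero, Nat.succ_sub_one, Nat.zero_sub, Nat.sub_self,
            sub2_1, sub2_2, subr2, subr1, subr1']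
         simp only [pderiv_mul, pderiv_pow, pderiv_X_self, h01, h10, map_add, mul_zero, zero_mul,
            add_zero, zero_add, mul_one, one_mul, pderiv_C, pdnat, pdofnat, pd_one,
            Nat.succ_sub_one, Nat.zero_sub, Nat.sub_self, sub2_1, sub2_2, subr2, subr1, subr1',
            Nat.cast_zero, Nat.cast_one, pow_zero, pow_one,
            map_sub, map_mul, map_pow, map_ofNat, map_one, map_neg, map_natCast, map_zero]
         push_cast
         ring)

/-- For g_j = (x²+y²)^{n-3j} x^{2j} y^{2j}, the expression (D_x²+D_y²) g_i·g_j
    = Δg_i·g_j + g_i·Δg_j - 2∇g_i·∇g_j is divisible by (x²+y²)^{2n-3i-3j-1}, and the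
    quotient evaluated at x² = -1, y² = 1 (i.e. at x = i, y = 1) equals
    -12(i-j)²(-1)^{i+j}. -/
theorem d_constant_formula (n i j : ℕ) (hi : 3 * i ≤ n) (hj : 3 * j ≤ n)
    (hij : 3 * i + 3 * j + 1 ≤ 2 * n) :
    ∃ P : MvPolynomial (Fin 2) ℂ,
      (let g : ℕ → MvPolynomial (Fin 2) ℂ := fun l =>
          (X 0 ^ 2 + X 1 ^ 2) ^ (n - 3 * l) * X 0 ^ (2 * l) * X 1 ^ (2 * l)
       let lap : MvPolynomial (Fin 2) ℂ → MvPolynomial (Fin 2) ℂ := fun p =>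
          pderiv 0 (pderiv 0 p) + pderiv 1 (pderiv 1 p)
       lap (g i) * g j + g i * lap (g j)
          - 2 * (pderiv 0 (g i) * pderiv 0 (g j) + pderiv 1 (g i) * pderiv 1 (g j))
        = (X 0 ^ 2 + X 1 ^ 2) ^ (2 * n - 3 * i - 3 * j - 1) * P) ∧
      eval (fun v : Fin 2 => if v = 0 then Complex.I else 1) P
        = -12 * ((i : ℂ) - (j : ℂ)) ^ 2 * (-1) ^ (i + j) := by
  refine ⟨PP (n - 3*i) (n - 3*j) i j, ?_, ?_⟩
  · show lapl (gg (n - 3*i) i) * gg (n - 3*j) j + gg (n - 3*i) i * lapl (gg (n - 3*j) j)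
        - 2 * (pderiv 0 (gg (n - 3*i) i) * pderiv 0 (gg (n - 3*j) j)
             + pderiv 1 (gg (n - 3*i) i) * pderiv 1 (gg (n - 3*j) j))
      = (X 0 ^ 2 + X 1 ^ 2) ^ (2 * n - 3 * i - 3 * j - 1) * PP (n - 3*i) (n - 3*j) i j
    have hA : 2 * n - 3 * i - 3 * j - 1 = (n - 3*i) + (n - 3*j) - 1 := by omega
    rw [hA]
    exact key _ _ i j (by omega)
  · have hI : Complex.I ^ (2*i+2*j) = (-1 : ℂ) ^ (i + j) := by
      rw [show 2*i+2*j = 2*(i+j) by ring, pow_mul, Complex.I_sq]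
    simp only [PP, map_add, map_mul, map_pow, eval_C, eval_X, eval_add, eval_mul, eval_pow]
    norm_num [hI]
    have hc : ((n - 3*i : ℕ) : ℂ) - ((n - 3*j : ℕ) : ℂ) = 3*(j:ℂ) - 3*(i:ℂ) := by
      rw [Nat.cast_sub hi, Nat.cast_sub hj]
      push_cast
      ring
    rw [hc]
    ring
end
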